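/- arXiv:1405.0654 — 4 statements merged into one kernel-verified Lean document; each statement's English description precedes it below -/
import Mathlib

section
/- Let α be a contact form on M with ξ = ker α and Reeb field R. The map Φ sending a contact vector field X of ξ to the function α(X), and the map Ψ sending a smooth function H to HR + Y, where Y is the unique vector field tangent to ξ with ι(Y)dα = dH(R)α − dH, are mutually inverse bijections between the set of smooth contact vector fields of ξ and C^∞(M). -/
noncomputable section

variable {V : Type*} [NormedAddCommGroup V] [NormedSpace ℝ V]

/-- Exterior derivative of a 1-form `α : V → V →L[ℝ] ℝ`, evaluated at `p`
on constant vector fields `u`, `v`. -/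
def extDeriv1 (α : V → V →L[ℝ] ℝ) (p u v : V) : ℝ :=
  fderiv ℝ α p u v - fderiv ℝ α p v u

/-- `α` is a contact form on the `(2n+1)`-dimensional space `V`:
`α ∧ (dα)^n` is nowhere vanishing. -/
def IsContactForm (n : ℕ) (α : V → V →L[ℝ] ℝ) : Prop :=
  ∀ p : V, ∃ v : Fin (2 * n + 1) → V,
    (∑ σ : Equiv.Perm (Fin (2 * n + 1)),
      ((Equiv.Perm.sign σ : ℤ) : ℝ) *
        (α p (v (σ ⟨0, by omega⟩)) *
          ∏ i : Fin n,
            extDeriv1 α p (v (σ ⟨2 * i + 1, by have := i.isLt; omega⟩))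
              (v (σ ⟨2 * i + 2, by have := i.isLt; omega⟩)))) ≠ 0

/-- `X` is a contact vector field for `ξ = ker α`: infinitesimally, via
Cartan's formula, `L_X α = ι_X dα + d(α(X))` is pointwise proportional to `α`. -/
def IsContactVF (α : V → V →L[ℝ] ℝ) (X : V → V) : Prop :=
  ∃ g : V → ℝ, ∀ p v : V,
    extDeriv1 α p (X p) v + fderiv ℝ (fun q => α q (X q)) p v = g p * α p v

/-- `Y` is the vector field tangent to `ξ = ker α` with
`ι(Y)dα = dH(R)α − dH`, associated to the function `H`. -/
def IsXiPart (α : V → V →L[ℝ] ℝ) (R : V → V) (H : V → ℝ) (Y : V → V) : Prop :=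
  (∀ p, α p (Y p) = 0) ∧
  (∀ p v : V, extDeriv1 α p (Y p) v
    = fderiv ℝ H p (R p) * α p v - fderiv ℝ H p v)

namespace ContactCorrAux

open Function

/-- The pointwise exterior derivative `dα_p` as a bilinear map. -/
def omL (α : V → V →L[ℝ] ℝ) (p : V) : V →ₗ[ℝ] V →ₗ[ℝ] ℝ :=
  LinearMap.mk₂ ℝ (fun u v => extDeriv1 α p u v)
    (fun u u' v => by
      simp [extDeriv1, map_add, ContinuousLinearMap.add_apply]; ring)
    (fun c u v => by
      simp [extDeriv1, map_smul, ContinuousLinearMap.smul_apply, smul_eq_mul]; ring)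
    (fun u v v' => by
      simp [extDeriv1, map_add, ContinuousLinearMap.add_apply]; ring)
    (fun c u v => by
      simp [extDeriv1, map_smul, ContinuousLinearMap.smul_apply, smul_eq_mul]; ring)

@[simp] theorem omL_apply (α : V → V →L[ℝ] ℝ) (p u v : V) :
    omL α p u v = extDeriv1 α p u v := rfl

theorem ext1_skew (α : V → V →L[ℝ] ℝ) (p u v : V) :
    extDeriv1 α p u v = -extDeriv1 α p v u := by
  unfold extDeriv1; ring

/-- Index `0` of `Fin (2n+1)`. -/
def o0 (n : ℕ) : Fin (2 * n + 1) := ⟨0, by omega⟩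

/-- Index `2i+1` of `Fin (2n+1)`. -/
def o1 {n : ℕ} (i : Fin n) : Fin (2 * n + 1) := ⟨2 * i + 1, by have := i.isLt; omega⟩

/-- Index `2i+2` of `Fin (2n+1)`. -/
def o2 {n : ℕ} (i : Fin n) : Fin (2 * n + 1) := ⟨2 * i + 2, by have := i.isLt; omega⟩

theorem fin_tri {n : ℕ} (j : Fin (2 * n + 1)) :
    j = o0 n ∨ (∃ i : Fin n, j = o1 i) ∨ (∃ i : Fin n, j = o2 i) := by
  obtain ⟨jv, hjv⟩ := j
  rcases Nat.even_or_odd jv with ⟨r, hr⟩ | ⟨r, hr⟩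
  · rcases Nat.eq_zero_or_pos r with rfl | hrpos
    · exact Or.inl (by apply Fin.ext; show jv = 0; omega)
    · refine Or.inr (Or.inr ⟨⟨r - 1, by omega⟩, ?_⟩)
      apply Fin.ext; show jv = 2 * (r - 1) + 2; omega
  · refine Or.inr (Or.inl ⟨⟨r, by omega⟩, ?_⟩)
    apply Fin.ext; show jv = 2 * r + 1; omega

/-- The raw (non-alternating) multilinear expression `α(v₀) ∏ dα(v_{2i+1}, v_{2i+2})`. -/
def rawF (n : ℕ) (a : V →ₗ[ℝ] ℝ) (ω : V →ₗ[ℝ] V →ₗ[ℝ] ℝ)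
    (m : Fin (2 * n + 1) → V) : ℝ :=
  a (m (o0 n)) * ∏ i : Fin n, ω (m (o1 i)) (m (o2 i))

theorem o1_ne_o0 {n : ℕ} (i : Fin n) : o1 i ≠ o0 n :=
  Fin.ne_of_val_ne (by simp [o1, o0])

theorem o2_ne_o0 {n : ℕ} (i : Fin n) : o2 i ≠ o0 n :=
  Fin.ne_of_val_ne (by simp [o2, o0])

theorem o1_ne_o2 {n : ℕ} (i i' : Fin n) : o1 i ≠ o2 i' :=
  Fin.ne_of_val_ne (by simp only [o1, o2]; omega)

theorem o1_ne_o1 {n : ℕ} {i i' : Fin n} (h : i ≠ i') : o1 i ≠ o1 i' :=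
  Fin.ne_of_val_ne (by
    simp only [o1]
    have : (i : ℕ) ≠ (i' : ℕ) := fun hc => h (Fin.ext hc)
    omega)

theorem o2_ne_o2 {n : ℕ} {i i' : Fin n} (h : i ≠ i') : o2 i ≠ o2 i' :=
  Fin.ne_of_val_ne (by
    simp only [o2]
    have : (i : ℕ) ≠ (i' : ℕ) := fun hc => h (Fin.ext hc)
    omega)

/-- In each slot, `rawF` is given by a linear functional. -/
theorem rawF_linear (n : ℕ) [DecidableEq (Fin (2 * n + 1))]
    (a : V →ₗ[ℝ] ℝ) (ω : V →ₗ[ℝ] V →ₗ[ℝ] ℝ)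
    (m : Fin (2 * n + 1) → V) (j : Fin (2 * n + 1)) :
    ∃ c : V →ₗ[ℝ] ℝ, ∀ x : V, rawF n a ω (update m j x) = c x := by
  rcases fin_tri j with h | ⟨i₀, h⟩ | ⟨i₀, h⟩
  · subst h
    refine ⟨(∏ i : Fin n, ω (m (o1 i)) (m (o2 i))) • a, fun x => ?_⟩
    unfold rawF
    rw [update_self]
    have hprod : ∏ i : Fin n, ω (update m (o0 n) x (o1 i)) (update m (o0 n) x (o2 i))
        = ∏ i : Fin n, ω (m (o1 i)) (m (o2 i)) :=
      Finset.prod_congr rfl fun i _ => by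
        rw [update_of_ne (o1_ne_o0 i), update_of_ne (o2_ne_o0 i)]
    rw [hprod, LinearMap.smul_apply, smul_eq_mul, mul_comm]
  · subst h
    refine ⟨(a (m (o0 n)) * ∏ i ∈ Finset.univ.erase i₀, ω (m (o1 i)) (m (o2 i))) •
      (ω.flip (m (o2 i₀))), fun x => ?_⟩
    unfold rawF
    rw [update_of_ne (Ne.symm (o1_ne_o0 i₀))]
    rw [← Finset.mul_prod_erase Finset.univ _ (Finset.mem_univ i₀)]
    have hrest : ∏ i ∈ Finset.univ.erase i₀, ω (update m (o1 i₀) x (o1 i))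
        (update m (o1 i₀) x (o2 i))
        = ∏ i ∈ Finset.univ.erase i₀, ω (m (o1 i)) (m (o2 i)) :=
      Finset.prod_congr rfl fun i hi => by
        rw [update_of_ne (o1_ne_o1 (Finset.ne_of_mem_erase hi)),
          update_of_ne (Ne.symm (o1_ne_o2 i₀ i))]
    rw [hrest, update_self, update_of_ne (Ne.symm (o1_ne_o2 i₀ i₀))]
    rw [LinearMap.smul_apply, LinearMap.flip_apply, smul_eq_mul]
    ring
  · subst h
    refine ⟨(a (m (o0 n)) * ∏ i ∈ Finset.univ.erase i₀, ω (m (o1 i)) (m (o2 i))) •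
      (ω (m (o1 i₀))), fun x => ?_⟩
    unfold rawF
    rw [update_of_ne (Ne.symm (o2_ne_o0 i₀))]
    rw [← Finset.mul_prod_erase Finset.univ _ (Finset.mem_univ i₀)]
    have hrest : ∏ i ∈ Finset.univ.erase i₀, ω (update m (o2 i₀) x (o1 i))
        (update m (o2 i₀) x (o2 i))
        = ∏ i ∈ Finset.univ.erase i₀, ω (m (o1 i)) (m (o2 i)) :=
      Finset.prod_congr rfl fun i hi => by
        rw [update_of_ne (o1_ne_o2 i i₀), update_of_ne (o2_ne_o2 (Finset.ne_of_mem_erase hi))]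
    rw [hrest, update_self, update_of_ne (o1_ne_o2 i₀ i₀)]
    rw [LinearMap.smul_apply, smul_eq_mul]
    ring

/-- `rawF` as a multilinear map. -/
def contactMul (n : ℕ) (a : V →ₗ[ℝ] ℝ) (ω : V →ₗ[ℝ] V →ₗ[ℝ] ℝ) :
    MultilinearMap ℝ (fun _ : Fin (2 * n + 1) => V) ℝ where
  toFun := rawF n a ω
  map_update_add' m j x y := by
    obtain ⟨c, hc⟩ := rawF_linear n a ω m j
    rw [hc, hc, hc, map_add]
  map_update_smul' m j r x := by
    obtain ⟨c, hc⟩ := rawF_linear n a ω m j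
    rw [hc, hc, map_smul]

@[simp] theorem contactMul_apply (n : ℕ) (a : V →ₗ[ℝ] ℝ) (ω : V →ₗ[ℝ] V →ₗ[ℝ] ℝ)
    (m : Fin (2 * n + 1) → V) : contactMul n a ω m = rawF n a ω m := rfl

/-- The key linear-algebra fact: if the top form `α ∧ (dα)^n` is nonvanishing at a
point, then a vector annihilated by both `α` and `dα` is zero. -/
theorem eq_zero_of_forms (n : ℕ) [FiniteDimensional ℝ V]
    (hdim : Module.finrank ℝ V = 2 * n + 1)
    (a : V →ₗ[ℝ] ℝ) (ω : V →ₗ[ℝ] V →ₗ[ℝ] ℝ) (hskew : ∀ u w, ω u w = -ω w u)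
    (v : Fin (2 * n + 1) → V)
    (hv : MultilinearMap.alternatization (contactMul n a ω) v ≠ 0)
    (Z : V) (hZ1 : a Z = 0) (hZ2 : ∀ u, ω Z u = 0) : Z = 0 := by
  set A := MultilinearMap.alternatization (contactMul n a ω) with hA
  have hF : ∀ m : Fin (2 * n + 1) → V, (∃ j, m j = Z) → contactMul n a ω m = 0 := by
    rintro m ⟨j, hj⟩
    rw [contactMul_apply]
    rcases fin_tri j with h | ⟨i₀, h⟩ | ⟨i₀, h⟩
    · subst h
      unfold rawF
      rw [hj, hZ1, zero_mul]
    · subst h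
      unfold rawF
      refine mul_eq_zero_of_right _ (Finset.prod_eq_zero (Finset.mem_univ i₀) ?_)
      rw [hj, hZ2]
    · subst h
      unfold rawF
      refine mul_eq_zero_of_right _ (Finset.prod_eq_zero (Finset.mem_univ i₀) ?_)
      rw [hj, hskew, hZ2, neg_zero]
  have hAZ : ∀ m : Fin (2 * n + 1) → V, (∃ j, m j = Z) → A m = 0 := by
    rintro m ⟨j, hj⟩
    rw [hA, MultilinearMap.alternatization_apply]
    refine Finset.sum_eq_zero fun σ _ => ?_
    rw [MultilinearMap.domDomCongr_apply,
      hF (fun i => m (σ i)) ⟨σ⁻¹ j, by simp [hj]⟩, smul_zero]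
  have hli : LinearIndependent ℝ v := by
    by_contra h
    exact hv (A.map_linearDependent v h)
  have hcard : Fintype.card (Fin (2 * n + 1)) = Module.finrank ℝ V := by
    rw [Fintype.card_fin, hdim]
  set b := basisOfLinearIndependentOfCardEqFinrank hli hcard with hbdef
  have hb : ⇑b = v := coe_basisOfLinearIndependentOfCardEqFinrank hli hcard
  have hZs : Z = ∑ j : Fin (2 * n + 1), b.repr Z j • v j := by
    conv_lhs => rw [← b.sum_repr Z]
    exact Finset.sum_congr rfl fun j _ => by rw [hb]
  have hrepr : ∀ k : Fin (2 * n + 1), b.repr Z k = 0 := by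
    intro k
    have h0 : A (Function.update v k Z) = 0 := hAZ _ ⟨k, Function.update_self _ _ _⟩
    rw [hZs] at h0
    rw [A.map_update_sum] at h0
    rw [Finset.sum_eq_single k
      (fun j _ hjk => by
        rw [A.map_update_smul, A.map_update_self v hjk.symm, smul_zero])
      (fun h => absurd (Finset.mem_univ k) h)] at h0
    rw [A.map_update_smul, Function.update_eq_self] at h0
    rcases smul_eq_zero.mp h0 with h | h
    · exact h
    · exact absurd h hv
  rw [hZs]
  simp [hrepr]

/-- Bridge between the sum in `IsContactForm` and the alternatization of `contactMul`. -/
theorem bridge (n : ℕ) (α : V → V →L[ℝ] ℝ) (p : V) (v : Fin (2 * n + 1) → V) :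
    MultilinearMap.alternatization (contactMul n ((α p).toLinearMap) (omL α p)) v
    = ∑ σ : Equiv.Perm (Fin (2 * n + 1)),
      ((Equiv.Perm.sign σ : ℤ) : ℝ) *
        (α p (v (σ ⟨0, by omega⟩)) *
          ∏ i : Fin n,
            extDeriv1 α p (v (σ ⟨2 * i + 1, by have := i.isLt; omega⟩))
              (v (σ ⟨2 * i + 2, by have := i.isLt; omega⟩))) := by
  rw [MultilinearMap.alternatization_apply]
  refine Finset.sum_congr rfl fun σ _ => ?_
  rw [MultilinearMap.domDomCongr_apply, Units.smul_def, zsmul_eq_mul]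
  rfl

/-- The pointwise version of the key fact, stated in terms of `α` and `extDeriv1`. -/
theorem key_zero (n : ℕ) [FiniteDimensional ℝ V]
    (hdim : Module.finrank ℝ V = 2 * n + 1)
    (α : V → V →L[ℝ] ℝ) (hcontact : IsContactForm n α) (p Z : V)
    (hZ1 : α p Z = 0) (hZ2 : ∀ u, extDeriv1 α p Z u = 0) : Z = 0 := by
  obtain ⟨v, hv⟩ := hcontact p
  refine eq_zero_of_forms n hdim ((α p).toLinearMap) (omL α p)
    (fun u w => ext1_skew α p u w) v ?_ Z hZ1 hZ2
  rw [bridge]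
  exact hv

/-- Pointwise solvability: any linear functional vanishing on the Reeb vector is
`ι(y)dα` for a unique `y ∈ ker α_p`. -/
theorem surj (n : ℕ) [FiniteDimensional ℝ V]
    (hdim : Module.finrank ℝ V = 2 * n + 1)
    (α : V → V →L[ℝ] ℝ) (hcontact : IsContactForm n α) (p Rp : V)
    (hR1 : α p Rp = 1) (hR2 : ∀ u, extDeriv1 α p Rp u = 0)
    (ψ : V →ₗ[ℝ] ℝ) (hψ : ψ Rp = 0) :
    ∃ y : V, α p y = 0 ∧ ∀ u, extDeriv1 α p y u = ψ u := by
  set a : V →ₗ[ℝ] ℝ := (α p).toLinearMap with ha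
  set T : V →ₗ[ℝ] (V →ₗ[ℝ] ℝ) := omL α p + a.smulRight a with hTdef
  have hT : ∀ z u : V, T z u = extDeriv1 α p z u + α p z * α p u := fun _ _ => rfl
  have hTinj : Function.Injective T := by
    rw [← LinearMap.ker_eq_bot, LinearMap.ker_eq_bot']
    intro z hz
    have h1 : α p z = 0 := by
      have e := DFunLike.congr_fun hz Rp
      rw [LinearMap.zero_apply, hT, ext1_skew, hR2, neg_zero, hR1, mul_one, zero_add] at e
      exact e
    refine key_zero n hdim α hcontact p z h1 fun u => ?_
    have e := DFunLike.congr_fun hz u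
    rw [LinearMap.zero_apply, hT, h1, zero_mul, add_zero] at e
    exact e
  have hfr : Module.finrank ℝ V = Module.finrank ℝ (V →ₗ[ℝ] ℝ) :=
    (Subspace.dual_finrank_eq (K := ℝ) (V := V)).symm
  obtain ⟨y, hy⟩ :=
    (LinearMap.injective_iff_surjective_of_finrank_eq_finrank hfr).mp hTinj ψ
  have hay : α p y = 0 := by
    have e := DFunLike.congr_fun hy Rp
    rw [hT, ext1_skew, hR2, neg_zero, hR1, mul_one, zero_add, hψ] at e
    exact e
  refine ⟨y, hay, fun u => ?_⟩
  have e := DFunLike.congr_fun hy u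
  rw [hT, hay, zero_mul, add_zero] at e
  exact e

end ContactCorrAux

open ContactCorrAux in
/-- The correspondence between contact vector fields of `ξ = ker α` and smooth
functions: `Φ(X) = α(X)` and `Ψ(H) = H·R + Y` (with `Y` the unique vector field
tangent to `ξ` satisfying `ι(Y)dα = dH(R)α − dH`) are mutually inverse.
Concretely: (a) for every smooth contact vector field `X`, with `H := α(X)`,
the field `Y := X − H·R` satisfies the defining property of the `ξ`-part, so
`Ψ(Φ(X)) = X`; (b) for every smooth `H` there is a unique such `Y`; and (c) for
any such `Y`, `Ψ(H) = H·R + Y` is a contact vector field with `Φ(Ψ(H)) = H`. -/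
theorem contact_vf_function_correspondence (n : ℕ) [FiniteDimensional ℝ V]
    (hdim : Module.finrank ℝ V = 2 * n + 1)
    (α : V → V →L[ℝ] ℝ) (hα : ContDiff ℝ (⊤ : ℕ∞) α) (hcontact : IsContactForm n α)
    (R : V → V) (hR : ContDiff ℝ (⊤ : ℕ∞) R)
    (hReeb : ∀ p, α p (R p) = 1 ∧ ∀ v, extDeriv1 α p (R p) v = 0) :
    (∀ X : V → V, ContDiff ℝ (⊤ : ℕ∞) X → IsContactVF α X →
      IsXiPart α R (fun p => α p (X p)) (fun p => X p - α p (X p) • R p)) ∧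
    (∀ H : V → ℝ, ContDiff ℝ (⊤ : ℕ∞) H → ∃! Y : V → V, IsXiPart α R H Y) ∧
    (∀ H : V → ℝ, ContDiff ℝ (⊤ : ℕ∞) H → ∀ Y : V → V, IsXiPart α R H Y →
      IsContactVF α (fun p => H p • R p + Y p) ∧
      ∀ p, α p (H p • R p + Y p) = H p) := by
  refine ⟨?_, ?_, ?_⟩
  · -- (a)
    intro X hX hXc
    obtain ⟨g, hg⟩ := hXc
    constructor
    · intro p
      show α p (X p - α p (X p) • R p) = 0
      rw [map_sub, map_smul, smul_eq_mul, (hReeb p).1, mul_one, sub_self]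
    · intro p u
      show extDeriv1 α p (X p - α p (X p) • R p) u
        = fderiv ℝ (fun p => α p (X p)) p (R p) * α p u
          - fderiv ℝ (fun p => α p (X p)) p u
      have hgp : fderiv ℝ (fun q => α q (X q)) p (R p) = g p := by
        have h1 := hg p (R p)
        rw [ext1_skew, (hReeb p).2 (X p), neg_zero, (hReeb p).1, mul_one, zero_add] at h1
        exact h1
      have hlin : extDeriv1 α p (X p - α p (X p) • R p) u
          = extDeriv1 α p (X p) u - α p (X p) * extDeriv1 α p (R p) u := by
        simp only [extDeriv1, map_sub, map_smul, ContinuousLinearMap.sub_apply,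
          ContinuousLinearMap.smul_apply, smul_eq_mul]
        ring
      rw [hlin, (hReeb p).2 u, mul_zero, sub_zero, hgp]
      have h2 := hg p u
      linarith
  · -- (b)
    intro H hH
    have hex : ∀ p : V, ∃ y : V, α p y = 0 ∧ ∀ u : V,
        extDeriv1 α p y u = fderiv ℝ H p (R p) * α p u - fderiv ℝ H p u := by
      intro p
      have hψ0 : (fderiv ℝ H p (R p) • (α p).toLinearMap
          - (fderiv ℝ H p).toLinearMap) (R p) = 0 := by
        rw [LinearMap.sub_apply, LinearMap.smul_apply, smul_eq_mul]
        show fderiv ℝ H p (R p) * α p (R p) - fderiv ℝ H p (R p) = 0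
        rw [(hReeb p).1, mul_one, sub_self]
      exact surj n hdim α hcontact p (R p) (hReeb p).1 ((hReeb p).2)
        (fderiv ℝ H p (R p) • (α p).toLinearMap - (fderiv ℝ H p).toLinearMap) hψ0
    choose Yf h1 h2 using hex
    refine ⟨Yf, ⟨h1, h2⟩, ?_⟩
    intro Y' hY'
    funext p
    have hz : Y' p - Yf p = 0 := by
      refine key_zero n hdim α hcontact p _ ?_ ?_
      · rw [map_sub, hY'.1 p, h1 p, sub_zero]
      · intro u
        have hlin : extDeriv1 α p (Y' p - Yf p) u
            = extDeriv1 α p (Y' p) u - extDeriv1 α p (Yf p) u := by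
          simp only [extDeriv1, map_sub, ContinuousLinearMap.sub_apply]
          ring
        rw [hlin, hY'.2 p u, h2 p u, sub_self]
    exact sub_eq_zero.mp hz
  · -- (c)
    intro H hH Y hY
    have hfun : (fun q => α q (H q • R q + Y q)) = H := by
      funext q
      rw [map_add, map_smul, (hReeb q).1, hY.1 q, smul_eq_mul, mul_one, add_zero]
    constructor
    · refine ⟨fun p => fderiv ℝ H p (R p), fun p u => ?_⟩
      show extDeriv1 α p (H p • R p + Y p) u
        + fderiv ℝ (fun q => α q (H q • R q + Y q)) p u
        = fderiv ℝ H p (R p) * α p u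
      rw [hfun]
      have hlin : extDeriv1 α p (H p • R p + Y p) u
          = H p * extDeriv1 α p (R p) u + extDeriv1 α p (Y p) u := by
        simp only [extDeriv1, map_add, map_smul, ContinuousLinearMap.add_apply,
          ContinuousLinearMap.smul_apply, smul_eq_mul]
        ring
      rw [hlin, (hReeb p).2 u, mul_zero, zero_add, hY.2 p u]
      ring
    · intro p
      rw [map_add, map_smul, (hReeb p).1, hY.1 p, smul_eq_mul, mul_one, add_zero]
end
end

section
/- Let k_1,…,k_n : T^n → ℝ be smooth functions with ∑_{i=1}^n k_i = 1 identically, and for b ∈ ℝ let A(b) be the n×n matrix-valued function on T^n with diagonal entries k_i + 2(n−1)b and off-diagonal entries −2b. Then for all sufficiently large b, the matrix A(b) is positive definite at every point of T^n. -/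
/-!
Writing `s = ∑ xᵢ` and `t = s / n`, the quadratic form of `A(b)` is
`∑ kᵢ xᵢ² + 2b (n ∑ xᵢ² - s²) = ∑ kᵢ xᵢ² + 2nb ∑ (xᵢ - t)²`.
The second term vanishes only on constant vectors, and on a constant vector `t` the first one
is `t²` because `∑ kᵢ = 1`. Quantitatively, if `|kᵢ| ≤ M` then expanding `xᵢ = t + (xᵢ - t)`
and applying AM-GM to the cross terms gives `∑ kᵢ xᵢ² ≥ t²/2 - (2nM² + M) ∑ (xᵢ - t)²`, so the
form is positive definite once `2nb > 2nM² + M`, e.g. for `b > M² + M`. A bound `M` uniform on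
the torus exists by compactness.
-/

noncomputable section

/-- The `n`-torus `T^n`. -/
abbrev Torus (n : ℕ) : Type := Fin n → AddCircle (1 : ℝ)

/-- The matrix `A(b)` with diagonal entries `k_i + 2(n−1)b` and off-diagonal
entries `−2b`. -/
def Amat (n : ℕ) (k : Fin n → ℝ) (b : ℝ) : Matrix (Fin n) (Fin n) ℝ :=
  Matrix.of fun i j => if i = j then k i + 2 * ((n : ℝ) - 1) * b else -2 * b

open Finset Matrix

theorem exists_forall_abs_le_of_continuous {X ι : Type*} [TopologicalSpace X] [CompactSpace X]
    [Fintype ι] {k : ι → X → ℝ} (hk : ∀ i, Continuous (k i)) : ∃ M, ∀ i x, |k i x| ≤ M := by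
  obtain ⟨M, hM⟩ := isCompact_univ.exists_bound_of_continuousOn (continuous_pi hk).continuousOn
  exact ⟨M, fun i x => (norm_le_pi_norm (fun i => k i x) i).trans (hM x trivial)⟩

theorem card_mul_sum_sub_mean_sq {ι : Type*} [Fintype ι] (x : ι → ℝ) :
    Fintype.card ι * ∑ i, (x i - (∑ j, x j) / Fintype.card ι) ^ 2
      = Fintype.card ι * ∑ i, x i ^ 2 - (∑ i, x i) ^ 2 := by
  rcases isEmpty_or_nonempty ι with hι | hι
  · simp
  simp only [sub_sq, sum_add_distrib, sum_sub_distrib, ← sum_mul, ← mul_sum, sum_const, card_univ,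
    nsmul_eq_mul]
  field_simp
  ring

theorem le_sum_mul_sq_of_sum_eq_one {ι : Type*} [Fintype ι] {k : ι → ℝ} {M : ℝ}
    (hM : ∀ i, |k i| ≤ M) (hsum : ∑ i, k i = 1) (x : ι → ℝ) (t : ℝ) :
    t ^ 2 / 2 - (2 * Fintype.card ι * M ^ 2 + M) * ∑ i, (x i - t) ^ 2 ≤ ∑ i, k i * x i ^ 2 := by
  set N : ℝ := (Fintype.card ι : ℝ)
  have hN : 0 < N := by
    have : Nonempty ι := by
      by_contra h
      simp [not_nonempty_iff.mp h] at hsum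
    positivity
  have hpoint : ∀ i, k i * t ^ 2 - t ^ 2 / (2 * N) - (2 * N * M ^ 2 + M) * (x i - t) ^ 2
      ≤ k i * x i ^ 2 := by
    intro i
    obtain ⟨hlo, hhi⟩ := abs_le.mp (hM i)
    have hsq : 0 ≤ M ^ 2 - k i ^ 2 := sub_nonneg.mpr (sq_le_sq' hlo hhi)
    have hMk : 0 ≤ M + k i := by linarith
    have hkey : 0 ≤ 2 * N * (k i * x i ^ 2 - k i * t ^ 2) + t ^ 2
        + 2 * N * (2 * N * M ^ 2 + M) * (x i - t) ^ 2 := by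
      have : 2 * N * (k i * x i ^ 2 - k i * t ^ 2) + t ^ 2
          + 2 * N * (2 * N * M ^ 2 + M) * (x i - t) ^ 2
          = (t + 2 * N * k i * (x i - t)) ^ 2 + 4 * N ^ 2 * (M ^ 2 - k i ^ 2) * (x i - t) ^ 2
            + 2 * N * (M + k i) * (x i - t) ^ 2 := by ring
      rw [this]
      positivity
    have hcancel : 2 * N * (t ^ 2 / (2 * N)) = t ^ 2 := by field_simp
    refine le_of_mul_le_mul_left ?_ (by positivity : 0 < 2 * N)
    linarith
  calc t ^ 2 / 2 - (2 * N * M ^ 2 + M) * ∑ i, (x i - t) ^ 2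
      = ∑ i, (k i * t ^ 2 - t ^ 2 / (2 * N) - (2 * N * M ^ 2 + M) * (x i - t) ^ 2) := by
        simp only [sum_sub_distrib, ← sum_mul, ← mul_sum, hsum, sum_const, card_univ, nsmul_eq_mul]
        field_simp
        ring
    _ ≤ ∑ i, k i * x i ^ 2 := sum_le_sum fun i _ => hpoint i

theorem Amat_isHermitian (n : ℕ) (k : Fin n → ℝ) (b : ℝ) : (Amat n k b).IsHermitian := by
  ext i j
  by_cases h : i = j <;> simp [Amat, h, eq_comm]

theorem Amat_mulVec_apply (n : ℕ) (k x : Fin n → ℝ) (b : ℝ) (i : Fin n) :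
    (Amat n k b *ᵥ x) i = (k i + 2 * n * b) * x i - 2 * b * ∑ j, x j := by
  have hentry : ∀ j, Amat n k b i j = (if i = j then k i + 2 * n * b else 0) - 2 * b := by
    intro j
    simp only [Amat, of_apply]
    split_ifs <;> ring
  simp only [mulVec, dotProduct, hentry, sub_mul, sum_sub_distrib, ite_mul, zero_mul, sum_ite_eq,
    mem_univ, if_true, mul_sum]

theorem dotProduct_Amat_mulVec (n : ℕ) (k x : Fin n → ℝ) (b : ℝ) :
    x ⬝ᵥ (Amat n k b *ᵥ x) = ∑ i, k i * x i ^ 2 + 2 * b * (n * ∑ i, x i ^ 2 - (∑ i, x i) ^ 2) := by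
  simp only [dotProduct, Amat_mulVec_apply]
  calc ∑ i, x i * ((k i + 2 * n * b) * x i - 2 * b * ∑ j, x j)
      = ∑ i, k i * x i ^ 2 + 2 * b * n * ∑ i, x i ^ 2 - 2 * b * (∑ j, x j) * ∑ i, x i := by
        simp only [mul_sum, ← sum_add_distrib, ← sum_sub_distrib]
        exact sum_congr rfl fun i _ => by ring
    _ = _ := by ring

theorem Amat_posDef_of_abs_le {n : ℕ} {k : Fin n → ℝ} {M b : ℝ} (hM : ∀ i, |k i| ≤ M)
    (hsum : ∑ i, k i = 1) (hb : M ^ 2 + M < b) : (Amat n k b).PosDef := by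
  have hn : (1 : ℝ) ≤ n := by
    rcases n with _ | n
    · simp at hsum
    · simp
  have hM0 : 0 ≤ M := (abs_nonneg _).trans (hM ⟨0, by exact_mod_cast hn⟩)
  refine .of_dotProduct_mulVec_pos (Amat_isHermitian n k b) fun x hx => ?_
  set t := (∑ j, x j) / n
  set V := ∑ i, (x i - t) ^ 2
  have hvar := card_mul_sum_sub_mean_sq x
  rw [Fintype.card_fin] at hvar
  have hform : x ⬝ᵥ (Amat n k b *ᵥ x) = ∑ i, k i * x i ^ 2 + 2 * n * b * V := by
    rw [dotProduct_Amat_mulVec, ← hvar]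
    ring
  have hbound := le_sum_mul_sq_of_sum_eq_one hM hsum x t
  rw [Fintype.card_fin] at hbound
  have hcoef : 0 < 2 * n * b - (2 * n * M ^ 2 + M) := by nlinarith
  have hpos : 0 < t ^ 2 / 2 + (2 * n * b - (2 * n * M ^ 2 + M)) * V := by
    rcases eq_or_ne t 0 with ht | ht
    · have hV : 0 < V := by
        obtain ⟨i, hi⟩ := Function.ne_iff.mp hx
        simpa [V, ht] using
          sum_pos' (fun j _ => sq_nonneg (x j)) ⟨i, mem_univ _, sq_pos_of_ne_zero hi⟩
      simp only [ht]
      positivity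
    · have hV : 0 ≤ V := sum_nonneg fun i _ => sq_nonneg _
      positivity
  rw [star_trivial, hform]
  linarith

theorem Amat_posDef_of_large_general (n : ℕ)
    (k : Fin n → Torus n → ℝ) (hk : ∀ i, Continuous (k i))
    (hsum : ∀ θ, ∑ i, k i θ = 1) :
    ∃ b₀ : ℝ, ∀ b ≥ b₀, ∀ θ : Torus n,
      (Amat n (fun i => k i θ) b).PosDef := by
  obtain ⟨M, hM⟩ := exists_forall_abs_le_of_continuous hk
  refine ⟨M ^ 2 + M + 1, fun b hb θ => ?_⟩
  exact Amat_posDef_of_abs_le (fun i => hM i θ) (hsum θ) (by linarith)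

/-- If `k_1,…,k_n : T^n → ℝ` are smooth (in particular continuous) with
`∑ k_i = 1`, then for all sufficiently large `b` the matrix `A(b)` is
positive definite at every point of `T^n`. -/
theorem Amat_posDef_of_large (n : ℕ) (hn : 0 < n)
    (k : Fin n → Torus n → ℝ) (hk : ∀ i, Continuous (k i))
    (hsum : ∀ θ, ∑ i, k i θ = 1) :
    ∃ b₀ : ℝ, ∀ b ≥ b₀, ∀ θ : Torus n,
      (Amat n (fun i => k i θ) b).PosDef :=
  Amat_posDef_of_large_general n k hk hsum
end
end

section
/- With A(b) as above (diagonal entries k_i + 2(n−1)b, off-diagonal entries −2b, where ∑ k_i = 1), the determinant of A(b) is a polynomial in b of degree n−1 whose leading coefficient is a positive constant independent of the functions k_i (namely n(2n)^{n−2} after appropriate normalization); in particular det A(b) > 0 for all sufficiently large b. -/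
/-!
Write `A(b) = diag(d) - 2b J` with `d_i = k_i + 2nb` and `J` the all-ones matrix. The matrix
determinant lemma gives `det A(b) = ∏ d_i - 2b ∑_i ∏_{j ≠ i} d_j`, and since `d_i - k_i = n (2b)`
for every `i`, this collapses to `n det A(b) = ∑_i k_i ∏_{j ≠ i} (k_j + 2nb)`. The right-hand side
has degree at most `n - 1` in `b`, with `b^(n-1)`-coefficient `(2n)^(n-1) ∑ k_i = (2n)^(n-1)`.
-/

noncomputable section

open Polynomial Finset Matrix Filter

variable {ι : Type*}

namespace Matrix

variable [Fintype ι] [DecidableEq ι]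

theorem det_diagonal_sub_const_of_field {K : Type*} [Field K] {d : ι → K} (hd : ∀ i, d i ≠ 0)
    (c : K) :
    (diagonal d - of fun _ _ => c).det = ∏ i, d i - c * ∑ i, ∏ j ∈ univ.erase i, d j := by
  have hfactor : diagonal d - of (fun _ _ => c) = diagonal d *
      (1 + replicateCol Unit (fun i => (d i)⁻¹) * replicateRow Unit (fun _ : ι => -c)) := by
    ext i j
    rw [diagonal_mul]
    by_cases h : i = j
    · subst h
      simp [mul_apply, mul_add, mul_inv_cancel_left₀ (hd i), sub_eq_add_neg]
    · simp [mul_apply, h, mul_inv_cancel_left₀ (hd i)]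
  have hquot : ∀ i, (∏ j, d j) * (d i)⁻¹ = ∏ j ∈ univ.erase i, d j := fun i => by
    rw [← mul_prod_erase univ d (mem_univ i), mul_comm, inv_mul_cancel_left₀ (hd i)]
  rw [hfactor, det_mul, det_diagonal, det_one_add_replicateCol_mul_replicateRow, dotProduct,
    mul_add, mul_one, sub_eq_add_neg, mul_sum, mul_sum, ← sum_neg_distrib]
  simp only [← hquot]
  exact congrArg _ (sum_congr rfl fun i _ => by ring)

theorem det_diagonal_sub_const {R : Type*} [CommRing R] [IsDomain R] {d : ι → R}
    (hd : ∀ i, d i ≠ 0) (c : R) :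
    (diagonal d - of fun _ _ => c).det = ∏ i, d i - c * ∑ i, ∏ j ∈ univ.erase i, d j := by
  let φ := algebraMap R (FractionRing R)
  have hφ : Function.Injective φ := IsFractionRing.injective R (FractionRing R)
  apply hφ
  have hmap : (diagonal d - of fun _ _ => c).map φ =
      diagonal (fun i => φ (d i)) - of fun _ _ => φ c := by
    ext i j; by_cases h : i = j <;> simp [h]
  rw [φ.map_det, RingHom.mapMatrix_apply, hmap,
    det_diagonal_sub_const_of_field (fun i => (map_ne_zero_iff φ hφ).2 (hd i))]
  simp [map_prod, map_sum]

theorem card_mul_det_diagonal_sub_const {R : Type*} [CommRing R] [IsDomain R] {d : ι → R}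
    (hd : ∀ i, d i ≠ 0) (k : ι → R) (c : R) (hdk : ∀ i, d i = k i + Fintype.card ι * c) :
    Fintype.card ι * (diagonal d - of fun _ _ => c).det =
      ∑ i, k i * ∏ j ∈ univ.erase i, d j := by
  have hcard : Fintype.card ι * ∏ i, d i = ∑ i, d i * ∏ j ∈ univ.erase i, d j := by
    simp only [mul_prod_erase univ d (mem_univ _), sum_const, card_univ, nsmul_eq_mul]
  rw [det_diagonal_sub_const hd, mul_sub, hcard, ← mul_assoc, mul_sum, ← sum_sub_distrib]
  exact sum_congr rfl fun i _ => by rw [hdk i]; ring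

end Matrix

namespace Polynomial

variable {R : Type*} [CommRing R]

theorem natDegree_prod_C_mul_X_add_C_le (s : Finset ι) (a : R) (b : ι → R) :
    (∏ j ∈ s, (C a * X + C (b j))).natDegree ≤ s.card := by
  refine (natDegree_prod_le _ _).trans ?_
  simpa using sum_le_sum fun j (_ : j ∈ s) => natDegree_linear_le (a := a) (b := b j)

theorem coeff_prod_C_mul_X_add_C_card (s : Finset ι) (a : R) (b : ι → R) :
    (∏ j ∈ s, (C a * X + C (b j))).coeff s.card = a ^ s.card := by
  simpa using coeff_prod_of_natDegree_le (s := s) _ 1 fun j _ =>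
    natDegree_linear_le (a := a) (b := b j)

theorem eventually_atTop_eval_pos {𝕜 : Type*} [NormedField 𝕜] [LinearOrder 𝕜]
    [IsStrictOrderedRing 𝕜] [OrderTopology 𝕜] {P : 𝕜[X]} (h : 0 < P.leadingCoeff) :
    ∀ᶠ x in atTop, 0 < P.eval x :=
  P.isEquivalent_atTop_lead.eventually_pos <|
    (eventually_gt_atTop 0).mono fun _ hx => mul_pos h (pow_pos hx _)

end Polynomial

def AmatPoly (n : ℕ) (k : Fin n → ℝ) : Matrix (Fin n) (Fin n) ℝ[X] :=
  diagonal (fun i => C (2 * n : ℝ) * X + C (k i)) - of fun _ _ => C 2 * X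

theorem eval_det_AmatPoly (n : ℕ) (k : Fin n → ℝ) (b : ℝ) :
    (AmatPoly n k).det.eval b = (Amat n k b).det := by
  rw [← coe_evalRingHom, RingHom.map_det, RingHom.mapMatrix_apply]
  congr 1
  ext i j
  by_cases h : i = j
  · subst h
    simp [AmatPoly, Amat]
    ring
  · simp [AmatPoly, Amat, h]

theorem natCast_mul_det_AmatPoly {n : ℕ} (hn : 0 < n) (k : Fin n → ℝ) :
    C (n : ℝ) * (AmatPoly n k).det =
      ∑ i, C (k i) * ∏ j ∈ univ.erase i, (C (2 * n : ℝ) * X + C (k j)) := by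
  have hd : ∀ i, C (2 * n : ℝ) * X + C (k i) ≠ 0 := fun i h => by
    simpa [hn.ne'] using congrArg (coeff · 1) h
  have := card_mul_det_diagonal_sub_const hd (fun i => C (k i)) (C 2 * X) fun i => by
    rw [Fintype.card_fin, ← map_natCast C, C_mul]; ring
  rwa [Fintype.card_fin, ← map_natCast C] at this

theorem natDegree_det_AmatPoly_le {n : ℕ} (hn : 0 < n) (k : Fin n → ℝ) :
    (AmatPoly n k).det.natDegree ≤ n - 1 := by
  have hn' : (n : ℝ) ≠ 0 := by simp [hn.ne']
  rw [← natDegree_C_mul hn', natCast_mul_det_AmatPoly hn]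
  refine natDegree_sum_le_of_forall_le _ _ fun i _ => (natDegree_C_mul_le _ _).trans ?_
  simpa using natDegree_prod_C_mul_X_add_C_le (univ.erase i) (2 * n : ℝ) k

theorem coeff_det_AmatPoly {n : ℕ} (hn : 0 < n) (k : Fin n → ℝ) (hsum : ∑ i, k i = 1) :
    (AmatPoly n k).det.coeff (n - 1) = (2 * n) ^ (n - 1) / n := by
  have hcoeff := congrArg (coeff · (n - 1)) (natCast_mul_det_AmatPoly hn k)
  have hprod : ∀ i, (∏ j ∈ univ.erase i, (C (2 * n : ℝ) * X + C (k j))).coeff (n - 1) =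
      (2 * n : ℝ) ^ (n - 1) := fun i => by
    have := coeff_prod_C_mul_X_add_C_card (univ.erase i) (2 * n : ℝ) k
    rwa [card_erase_of_mem (mem_univ i), card_fin] at this
  simp only [coeff_C_mul, finsetSum_coeff, hprod, ← sum_mul, hsum, one_mul] at hcoeff
  rw [eq_div_iff (by positivity), mul_comm, hcoeff]

/-- If `∑ k_i = 1`, then `det A(b)` is a polynomial in `b` of degree at most
`n−1` whose degree-`(n−1)` coefficient is positive; in particular
`det A(b) > 0` for all sufficiently large `b`. -/
theorem det_Amat_polynomial (n : ℕ) (hn : 0 < n)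
    (k : Fin n → ℝ) (hsum : ∑ i, k i = 1) :
    ∃ P : Polynomial ℝ,
      (∀ b : ℝ, P.eval b = (Amat n k b).det) ∧
      P.natDegree ≤ n - 1 ∧
      0 < P.coeff (n - 1) ∧
      ∃ b₀ : ℝ, ∀ b ≥ b₀, 0 < (Amat n k b).det := by
  have hdeg := natDegree_det_AmatPoly_le hn k
  have hpos : 0 < (AmatPoly n k).det.coeff (n - 1) := by
    rw [coeff_det_AmatPoly hn k hsum]; positivity
  have hlead : (AmatPoly n k).det.leadingCoeff = (AmatPoly n k).det.coeff (n - 1) := by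
    rw [leadingCoeff, natDegree_eq_of_le_of_coeff_ne_zero hdeg hpos.ne']
  obtain ⟨b₀, hb₀⟩ := eventually_atTop.1 (eventually_atTop_eval_pos (hlead ▸ hpos))
  exact ⟨_, eval_det_AmatPoly n k, hdeg, hpos, b₀,
    fun b hb => eval_det_AmatPoly n k b ▸ hb₀ b hb⟩
end
end

section
/- With E(c) = {v ∈ ℝ^n : ∑_i k_i(θ)v_i² + b∑_{p≠q}(v_p − v_q)² ≤ c} and J(c) the segment from −(√c,…,√c) to (√c,…,√c): as b → ∞, E(c) converges to J(c) in Hausdorff distance, uniformly in θ ∈ T^n. -/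
noncomputable section

/-- The quadratic form `Q(v) = ∑ᵢ kᵢ(θ)vᵢ² + b ∑_{p≠q} (v_p − v_q)²`. -/
def Qform (n : ℕ) (k : Fin n → Torus n → ℝ) (b : ℝ)
    (v : Fin n → ℝ) (θ : Torus n) : ℝ :=
  ∑ i, k i θ * v i ^ 2 + b * ∑ p, ∑ q, if p ≠ q then (v p - v q) ^ 2 else 0

/-! Fix `θ`, write `w = k(θ)` and let `a = K n`, where `K` bounds every `|kᵢ|` on the compact torus.
For `v ∈ E(c)` take a reference coordinate `x = v_j` and `δ = √(∑_{p≠q} (v_p − v_q)²)`: then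
`|vᵢ − x| ≤ δ` for all `i`, so `∑ wᵢ vᵢ² ≥ x² − a δ (2|x| + δ)`. Completing the square in
`Q(v) ≤ c` gives `(b − a − a²) δ² ≤ c` and `|x| ≤ √c + 2aδ`, so `v` lies within
`(1 + 2a) δ = O(b^{-1/2})` of the constant vector obtained by clamping `x` to `[−√c, √c]`.
Conversely every constant vector `t` with `|t| ≤ √c` has `Q = t² ≤ c`. -/

open Filter Topology Set

lemma abs_sq_sub_sq_le {x y δ : ℝ} (h : |y - x| ≤ δ) : |y ^ 2 - x ^ 2| ≤ δ * (2 * |x| + δ) := by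
  have hsum : |y + x| ≤ 2 * |x| + δ := by
    calc |y + x| = |(y - x) + 2 * x| := by ring_nf
      _ ≤ |y - x| + |2 * x| := abs_add_le _ _
      _ ≤ 2 * |x| + δ := by rw [abs_mul, abs_two]; linarith
  rw [sq_sub_sq, abs_mul, mul_comm]
  exact mul_le_mul h hsum (abs_nonneg _) ((abs_nonneg _).trans h)

lemma exists_abs_le_of_continuous {X ι : Type*} [TopologicalSpace X] [CompactSpace X] [Fintype ι]
    (f : ι → X → ℝ) (hf : ∀ i, Continuous (f i)) : ∃ K, ∀ i x, |f i x| ≤ K := by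
  obtain ⟨K, hK⟩ := isCompact_univ.exists_bound_of_continuousOn
    (continuous_pi hf).continuousOn (f := fun x i => f i x)
  exact ⟨K, fun i x => (norm_le_pi_norm (fun i => f i x) i).trans (hK x (mem_univ x))⟩

lemma abs_le_sqrt_add_of_le {a b c x δ : ℝ} (ha : 0 ≤ a) (hδ : 0 ≤ δ) (hc : 0 ≤ c)
    (hab : a ≤ b) (h : x ^ 2 - a * δ * (2 * |x| + δ) + b * δ ^ 2 ≤ c) :
    |x| ≤ √c + 2 * a * δ := by
  have hsq : (|x| - a * δ) ^ 2 ≤ (√c + a * δ) ^ 2 := by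
    nlinarith [sq_abs x, Real.sq_sqrt hc, Real.sqrt_nonneg c, mul_nonneg ha hδ,
      mul_nonneg (sub_nonneg.2 hab) (sq_nonneg δ)]
  nlinarith [abs_le_of_sq_le_sq' hsq (by positivity)]

lemma le_sqrt_div_of_le {a b c x δ : ℝ} (hb : a + a ^ 2 < b)
    (h : x ^ 2 - a * δ * (2 * |x| + δ) + b * δ ^ 2 ≤ c) :
    δ ≤ √(c / (b - a - a ^ 2)) := by
  refine Real.le_sqrt_of_sq_le ((le_div_iff₀ (by linarith)).2 ?_)
  nlinarith [sq_nonneg (|x| - a * δ), sq_abs x]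

lemma segment_const_eq_image {ι : Type*} {r : ℝ} (hr : 0 ≤ r) :
    segment ℝ (fun _ : ι => -r) (fun _ => r) = (fun t _ => t) '' Icc (-r) r := by
  rw [← segment_eq_Icc (by linarith)]
  exact (image_segment ℝ (LinearMap.pi fun _ : ι => LinearMap.id).toAffineMap (-r) r).symm

section Sublevel

variable {ι : Type*} [Fintype ι] {w : ι → ℝ} {K : ℝ}

lemma nonneg_of_sum_eq_one_of_abs_le (hw : ∑ i, w i = 1) (hK : ∀ i, |w i| ≤ K) : 0 ≤ K := by
  obtain ⟨j, -, -⟩ := Finset.exists_ne_zero_of_sum_ne_zero (hw ▸ one_ne_zero : ∑ i, w i ≠ 0)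
  exact (abs_nonneg _).trans (hK j)

lemma abs_sum_mul_sq_sub_sq_le {v : ι → ℝ} {x δ : ℝ} (hw : ∑ i, w i = 1)
    (hK : ∀ i, |w i| ≤ K) (hv : ∀ i, |v i - x| ≤ δ) :
    |∑ i, w i * v i ^ 2 - x ^ 2| ≤ K * Fintype.card ι * (δ * (2 * |x| + δ)) := by
  have hx : ∑ i, w i * v i ^ 2 - x ^ 2 = ∑ i, w i * (v i ^ 2 - x ^ 2) := by
    simp only [mul_sub, Finset.sum_sub_distrib, ← Finset.sum_mul, hw, one_mul]
  calc |∑ i, w i * v i ^ 2 - x ^ 2| ≤ ∑ i, |w i| * |v i ^ 2 - x ^ 2| := by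
        rw [hx]
        exact (Finset.abs_sum_le_sum_abs _ _).trans_eq (by simp only [abs_mul])
    _ ≤ ∑ _i : ι, K * (δ * (2 * |x| + δ)) := by
        gcongr with i
        · exact (abs_nonneg _).trans (hK i)
        · exact hK i
        · exact abs_sq_sub_sq_le (hv i)
    _ = K * Fintype.card ι * (δ * (2 * |x| + δ)) := by
        rw [Finset.sum_const, Finset.card_univ, nsmul_eq_mul]; ring

lemma exists_mem_segment_dist_le {v : ι → ℝ} {r x δ η : ℝ} (hr : 0 ≤ r) (hδ : 0 ≤ δ)
    (hη : 0 ≤ η) (hv : ∀ i, |v i - x| ≤ δ) (hx : |x| ≤ r + η) :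
    ∃ y ∈ segment ℝ (fun _ : ι => -r) (fun _ => r), dist v y ≤ δ + η := by
  set t := max (-r) (min r x)
  have ht : t ∈ Icc (-r) r := ⟨le_max_left _ _, max_le (by linarith) (min_le_left _ _)⟩
  have hxt : |x - t| ≤ η := by
    rw [abs_le] at hx ⊢
    constructor <;> simp only [t, max_def, min_def] <;> split_ifs <;> linarith
  refine ⟨fun _ => t, by rw [segment_const_eq_image (ι := ι) hr]; exact mem_image_of_mem _ ht,
    (dist_pi_le_iff (f := v) (by positivity)).2 fun i => ?_⟩
  calc dist (v i) t = |(v i - x) + (x - t)| := by rw [Real.dist_eq]; ring_nf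
    _ ≤ δ + η := (abs_add_le _ _).trans (add_le_add (hv i) hxt)

variable [DecidableEq ι]

def offDiagSqSum (v : ι → ℝ) : ℝ := ∑ p, ∑ q, if p ≠ q then (v p - v q) ^ 2 else 0

lemma offDiagSqSum_nonneg (v : ι → ℝ) : 0 ≤ offDiagSqSum v :=
  Finset.sum_nonneg fun p _ => Finset.sum_nonneg fun q _ => by split_ifs <;> positivity

lemma sq_sub_le_offDiagSqSum (v : ι → ℝ) (i j : ι) : (v i - v j) ^ 2 ≤ offDiagSqSum v := by
  by_cases hij : i = j
  · simpa [hij] using offDiagSqSum_nonneg v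
  calc (v i - v j) ^ 2 = if i ≠ j then (v i - v j) ^ 2 else 0 := (if_pos hij).symm
    _ ≤ ∑ q, if i ≠ q then (v i - v q) ^ 2 else 0 :=
        Finset.single_le_sum (f := fun q => if i ≠ q then (v i - v q) ^ 2 else 0)
          (fun q _ => by split_ifs <;> positivity) (Finset.mem_univ j)
    _ ≤ offDiagSqSum v :=
        Finset.single_le_sum (f := fun p => ∑ q, if p ≠ q then (v p - v q) ^ 2 else 0)
          (fun p _ => Finset.sum_nonneg fun q _ => by split_ifs <;> positivity)
          (Finset.mem_univ i)

lemma offDiagSqSum_const (t : ℝ) : offDiagSqSum (fun _ : ι => t) = 0 := by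
  simp [offDiagSqSum]

def weightedSublevel (w : ι → ℝ) (b c : ℝ) : Set (ι → ℝ) :=
  {v | ∑ i, w i * v i ^ 2 + b * offDiagSqSum v ≤ c}

variable {b c : ℝ}

lemma segment_subset_weightedSublevel (hw : ∑ i, w i = 1) (hc : 0 ≤ c) :
    segment ℝ (fun _ : ι => -√c) (fun _ => √c) ⊆ weightedSublevel w b c := by
  rw [segment_const_eq_image (Real.sqrt_nonneg c)]
  rintro _ ⟨t, ht, rfl⟩
  have ht2 : t ^ 2 ≤ c := by
    rw [← Real.sq_sqrt hc, sq_le_sq, abs_of_nonneg (Real.sqrt_nonneg c)]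
    exact abs_le.2 ht
  simpa [weightedSublevel, offDiagSqSum_const, ← Finset.sum_mul, hw] using ht2

lemma exists_mem_segment_dist_le_of_mem_weightedSublevel (hw : ∑ i, w i = 1)
    (hK : ∀ i, |w i| ≤ K) (hb : K * Fintype.card ι + (K * Fintype.card ι) ^ 2 < b)
    (hc : 0 ≤ c) {v : ι → ℝ} (hv : v ∈ weightedSublevel w b c) :
    ∃ y ∈ segment ℝ (fun _ : ι => -√c) (fun _ => √c), dist v y ≤
      (1 + 2 * (K * Fintype.card ι)) *
        √(c / (b - K * Fintype.card ι - (K * Fintype.card ι) ^ 2)) := by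
  set a := K * Fintype.card ι
  obtain ⟨j, -, -⟩ := Finset.exists_ne_zero_of_sum_ne_zero (hw ▸ one_ne_zero : ∑ i, w i ≠ 0)
  have ha : 0 ≤ a := mul_nonneg (nonneg_of_sum_eq_one_of_abs_le hw hK) (Nat.cast_nonneg _)
  set δ := √(offDiagSqSum v)
  have hδ : 0 ≤ δ := Real.sqrt_nonneg _
  have hvj : ∀ i, |v i - v j| ≤ δ := fun i => Real.abs_le_sqrt (sq_sub_le_offDiagSqSum v i j)
  have hquad : v j ^ 2 - a * δ * (2 * |v j| + δ) + b * δ ^ 2 ≤ c := by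
    have := (abs_le.1 (abs_sum_mul_sq_sub_sq_le hw hK hvj)).1
    rw [Real.sq_sqrt (offDiagSqSum_nonneg v)]
    simp only [weightedSublevel, Set.mem_ofPred_eq] at hv
    linarith
  have hδb := le_sqrt_div_of_le hb hquad
  obtain ⟨y, hy, hvy⟩ := exists_mem_segment_dist_le (Real.sqrt_nonneg c) hδ (by positivity) hvj
    (abs_le_sqrt_add_of_le ha hδ hc (by nlinarith) hquad)
  refine ⟨y, hy, hvy.trans ?_⟩
  calc δ + 2 * a * δ = (1 + 2 * a) * δ := by ring
    _ ≤ _ := by gcongr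

lemma hausdorffDist_weightedSublevel_segment_le (hw : ∑ i, w i = 1)
    (hK : ∀ i, |w i| ≤ K) (hb : K * Fintype.card ι + (K * Fintype.card ι) ^ 2 < b)
    (hc : 0 ≤ c) :
    Metric.hausdorffDist (weightedSublevel w b c) (segment ℝ (fun _ : ι => -√c) (fun _ => √c)) ≤
      (1 + 2 * (K * Fintype.card ι)) *
        √(c / (b - K * Fintype.card ι - (K * Fintype.card ι) ^ 2)) := by
  have hK0 := nonneg_of_sum_eq_one_of_abs_le hw hK
  exact Metric.hausdorffDist_le_of_mem_dist (by positivity)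
    (fun v hv => exists_mem_segment_dist_le_of_mem_weightedSublevel hw hK hb hc hv)
    (fun y hy => ⟨y, segment_subset_weightedSublevel hw hc hy, by rw [dist_self]; positivity⟩)

end Sublevel

theorem sublevel_hausdorff_convergence_general (n : ℕ)
    (k : Fin n → Torus n → ℝ) (hk : ∀ i, Continuous (k i))
    (hsum : ∀ θ, ∑ i, k i θ = 1) (c : ℝ) (hc : 0 < c) :
    ∀ ε > 0, ∃ b₀ : ℝ, ∀ b ≥ b₀, ∀ θ : Torus n,
      Metric.hausdorffDist {v : Fin n → ℝ | Qform n k b v θ ≤ c}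
        (segment ℝ (fun _ => -Real.sqrt c) (fun _ => Real.sqrt c)) < ε := by
  obtain ⟨K, hK⟩ := exists_abs_le_of_continuous k hk
  set a := K * n
  have hbound : ∀ b > a + a ^ 2, ∀ θ, Metric.hausdorffDist {v : Fin n → ℝ | Qform n k b v θ ≤ c}
      (segment ℝ (fun _ => -√c) (fun _ => √c)) ≤ (1 + 2 * a) * √(c / (b - a - a ^ 2)) :=
    fun b hb θ => by
      have h := hausdorffDist_weightedSublevel_segment_le (b := b) (hsum θ) (fun i => hK i θ)
        (by rwa [Fintype.card_fin]) hc.le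
      rwa [Fintype.card_fin] at h
  have hlim : Tendsto (fun b => (1 + 2 * a) * √(c / (b - a - a ^ 2))) atTop (𝓝 0) := by
    have h := ((tendsto_const_nhds (x := c)).div_atTop
      (tendsto_atTop_add_const_right _ (-a - a ^ 2) tendsto_id)).sqrt.const_mul (1 + 2 * a)
    rw [Real.sqrt_zero, mul_zero] at h
    exact h.congr fun b => by rw [id, ← add_sub_assoc, ← sub_eq_add_neg]
  intro ε hε
  obtain ⟨b₀, hb₀⟩ := eventually_atTop.1
    ((hlim.eventually_lt_const hε).and (eventually_gt_atTop (a + a ^ 2)))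
  exact ⟨b₀, fun b hb θ => (hbound b (hb₀ b hb).2 θ).trans_lt (hb₀ b hb).1⟩

/-- As `b → ∞`, the sublevel set `E(c) = {v : Q(v) ≤ c}` converges in
Hausdorff distance to the segment `J(c)` from `−(√c,…,√c)` to `(√c,…,√c)`,
uniformly in `θ ∈ T^n`. -/
theorem sublevel_hausdorff_convergence (n : ℕ) (hn : 0 < n)
    (k : Fin n → Torus n → ℝ) (hk : ∀ i, Continuous (k i))
    (hsum : ∀ θ, ∑ i, k i θ = 1) (c : ℝ) (hc : 0 < c) :
    ∀ ε > 0, ∃ b₀ : ℝ, ∀ b ≥ b₀, ∀ θ : Torus n,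
      Metric.hausdorffDist {v : Fin n → ℝ | Qform n k b v θ ≤ c}
        (segment ℝ (fun _ => -Real.sqrt c) (fun _ => Real.sqrt c)) < ε :=
  sublevel_hausdorff_convergence_general n k hk hsum c hc
end
end
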